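/- Let W be a Lagrangian of V. Then W contains a perfect cube if and only if all elements of W have a common root, i.e. there exists [a:b] ∈ ℂℙ¹ such that the linear form bX − aY divides every element of W. -/

import Mathlib

noncomputable section

open MvPolynomial

/-- The polynomial ring `ℂ[X,Y]`. -/
abbrev P2 : Type := MvPolynomial (Fin 2) ℂ

/-- The variable `X`. -/
def Xv : P2 := X 0

/-- The variable `Y`. -/
def Yv : P2 := X 1

/-- `V`: the space of homogeneous cubic polynomials in `X, Y`. -/
def Vcubic : Submodule ℂ P2 := homogeneousSubmodule (Fin 2) ℂ 3

/-- The coefficient of `X^i Y^j`. -/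
def cf (i j : ℕ) (p : P2) : ℂ := coeff (Finsupp.single 0 i + Finsupp.single 1 j) p

/-- The alternating bilinear form `ω` with `ω(X³,Y³) = 1`, `ω(X²Y,XY²) = -1/3`,
all other pairings of distinct basis vectors being `0`. -/
def omegaForm (p q : P2) : ℂ :=
  cf 3 0 p * cf 0 3 q - cf 0 3 p * cf 3 0 q
    - (1 / 3) * (cf 2 1 p * cf 1 2 q - cf 1 2 p * cf 2 1 q)

/-- The linear form `b X - a Y` associated to the point `[a : b] ∈ ℂℙ¹`. -/
def lf (a b : ℂ) : P2 := C b * Xv - C a * Yv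

/-- A Lagrangian of `V`: a 2-dimensional subspace contained in `V` on which `ω` vanishes. -/
def IsLagrangian (W : Submodule ℂ P2) : Prop :=
  W ≤ Vcubic ∧ Module.finrank ℂ W = 2 ∧ ∀ p ∈ W, ∀ q ∈ W, omegaForm p q = 0

/-- A perfect cube: a nonzero element of the form `c • (bX - aY)³`. -/
def IsPerfectCube (p : P2) : Prop :=
  ∃ c a b : ℂ, c ≠ 0 ∧ (a ≠ 0 ∨ b ≠ 0) ∧ p = C c * lf a b ^ 3

/-- The action of `SL(2,ℂ)` on `ℂ[X,Y]` by linear substitution of the variables. -/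
def subst (g : Matrix.SpecialLinearGroup (Fin 2) ℂ) : P2 →ₐ[ℂ] P2 :=
  aeval (fun i => C (g.1 i 0) * Xv + C (g.1 i 1) * Yv)

/-- The induced action of `SL(2,ℂ)` on subspaces of `ℂ[X,Y]`. -/
def mapAct (g : Matrix.SpecialLinearGroup (Fin 2) ℂ) (W : Submodule ℂ P2) :
    Submodule ℂ P2 :=
  W.map (subst g).toLinearMap

/-- The `SL(2,ℂ)`-orbit of a subspace. -/
def slOrbit (W₀ : Submodule ℂ P2) : Set (Submodule ℂ P2) := {W | ∃ g, W = mapAct g W₀}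

/-! Pairing with a cube `ℓ³`, `ℓ = bX - aY`, is evaluation at `[a : b]`: `ω(ℓ³, q) = q(a, b)`.
So if `c ℓ³ ∈ W`, every element of `W` vanishes at `[a : b]`, i.e. is divisible by `ℓ`.
Conversely, if `ℓ` divides every element of `W`, then `ℓ³` is `ω`-orthogonal to `W`; as `ω` is
nondegenerate on the 4-dimensional `V`, the 2-dimensional isotropic `W` is its own orthogonal
complement, so `ℓ³ ∈ W`. -/

open Module in
theorem LinearMap.BilinForm.orthogonal_eq_self_of_le_orthogonal {K V : Type*} [Field K]
    [AddCommGroup V] [Module K V] [FiniteDimensional K V] {B : LinearMap.BilinForm K V}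
    (hB : B.Nondegenerate) {L : Submodule K V} (hL : L ≤ B.orthogonal L)
    (hdim : 2 * finrank K L = finrank K V) : B.orthogonal L = L :=
  (Submodule.eq_of_le_of_finrank_eq hL (by rw [finrank_orthogonal hB]; omega)).symm

def cubic (c₃ c₂ c₁ c₀ : ℂ) : P2 :=
  C c₃ * Xv ^ 3 + C c₂ * (Xv ^ 2 * Yv) + C c₁ * (Xv * Yv ^ 2) + C c₀ * Yv ^ 3

lemma cf_add (i j : ℕ) (p q : P2) : cf i j (p + q) = cf i j p + cf i j q := coeff_add _ _ _

lemma cf_sub (i j : ℕ) (p q : P2) : cf i j (p - q) = cf i j p - cf i j q := coeff_sub _ _ _ _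

lemma cf_C_mul (i j : ℕ) (c : ℂ) (p : P2) : cf i j (C c * p) = c * cf i j p := coeff_C_mul _ _ _

lemma cf_Xv_pow_mul_Yv_pow (i j k l : ℕ) :
    cf i j (Xv ^ k * Yv ^ l) = if k = i ∧ l = j then 1 else 0 := by
  simp only [cf, Xv, Yv, X_pow_eq_monomial, monomial_mul, one_mul, coeff_monomial]
  congr 1
  refine propext ⟨fun h => ?_, fun ⟨hk, hl⟩ => hk ▸ hl ▸ rfl⟩
  have h0 := DFunLike.congr_fun h 0
  have h1 := DFunLike.congr_fun h 1
  simp only [Finsupp.add_apply, Finsupp.single_apply] at h0 h1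
  simp_all

lemma cf_cubic (c₃ c₂ c₁ c₀ : ℂ) :
    cf 3 0 (cubic c₃ c₂ c₁ c₀) = c₃ ∧ cf 2 1 (cubic c₃ c₂ c₁ c₀) = c₂ ∧
      cf 1 2 (cubic c₃ c₂ c₁ c₀) = c₁ ∧ cf 0 3 (cubic c₃ c₂ c₁ c₀) = c₀ := by
  have h30 (i j : ℕ) := cf_Xv_pow_mul_Yv_pow i j 3 0
  have h21 (i j : ℕ) := cf_Xv_pow_mul_Yv_pow i j 2 1
  have h12 (i j : ℕ) := cf_Xv_pow_mul_Yv_pow i j 1 2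
  have h03 (i j : ℕ) := cf_Xv_pow_mul_Yv_pow i j 0 3
  simp only [pow_zero, pow_one, mul_one, one_mul] at h30 h21 h12 h03
  simp [cubic, cf_add, cf_C_mul, h30, h21, h12, h03]

lemma eq_zero_of_mem_Vcubic_of_cf_eq_zero {p : P2} (hp : p ∈ Vcubic) (h₃ : cf 3 0 p = 0)
    (h₂ : cf 2 1 p = 0) (h₁ : cf 1 2 p = 0) (h₀ : cf 0 3 p = 0) : p = 0 := by
  ext d
  rw [coeff_zero]
  by_cases hd : d 0 + d 1 = 3
  · have hd' : d = Finsupp.single 0 (d 0) + Finsupp.single 1 (d 1) := by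
      ext i; fin_cases i <;> simp
    rw [hd']
    obtain ⟨e₀, e₁⟩ | ⟨e₀, e₁⟩ | ⟨e₀, e₁⟩ | ⟨e₀, e₁⟩ : (d 0 = 3 ∧ d 1 = 0) ∨ (d 0 = 2 ∧ d 1 = 1) ∨
        (d 0 = 1 ∧ d 1 = 2) ∨ (d 0 = 0 ∧ d 1 = 3) := by omega
    all_goals rw [e₀, e₁]; assumption
  · refine ((mem_homogeneousSubmodule _ _).1 hp).coeff_eq_zero ?_
    rwa [Finsupp.degree_eq_sum, Fin.sum_univ_two]

lemma cubic_mem_Vcubic (c₃ c₂ c₁ c₀ : ℂ) : cubic c₃ c₂ c₁ c₀ ∈ Vcubic := by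
  have hX : Xv.IsHomogeneous 1 := isHomogeneous_X _ _
  have hY : Yv.IsHomogeneous 1 := isHomogeneous_X _ _
  simp only [cubic, ← smul_eq_C_mul]
  refine add_mem (add_mem (add_mem ?_ ?_) ?_) ?_ <;>
    refine Submodule.smul_mem _ _ ((mem_homogeneousSubmodule _ _).2 ?_)
  · simpa using hX.pow 3
  · simpa using (hX.pow 2).mul hY
  · simpa using hX.mul (hY.pow 2)
  · simpa using hY.pow 3

lemma eq_cubic_of_mem_Vcubic {p : P2} (hp : p ∈ Vcubic) :
    p = cubic (cf 3 0 p) (cf 2 1 p) (cf 1 2 p) (cf 0 3 p) := by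
  obtain ⟨h₃, h₂, h₁, h₀⟩ := cf_cubic (cf 3 0 p) (cf 2 1 p) (cf 1 2 p) (cf 0 3 p)
  refine sub_eq_zero.1 (eq_zero_of_mem_Vcubic_of_cf_eq_zero (Submodule.sub_mem _ hp
    (cubic_mem_Vcubic _ _ _ _)) ?_ ?_ ?_ ?_) <;>
    simp only [cf_sub, h₃, h₂, h₁, h₀, sub_self]

lemma eval_cubic (a b c₃ c₂ c₁ c₀ : ℂ) :
    eval ![a, b] (cubic c₃ c₂ c₁ c₀) =
      c₃ * a ^ 3 + c₂ * a ^ 2 * b + c₁ * a * b ^ 2 + c₀ * b ^ 3 := by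
  simp [cubic, Xv, Yv, mul_assoc]

lemma eval_lf (a b : ℂ) : eval ![a, b] (lf a b) = 0 := by
  simp [lf, Xv, Yv, mul_comm]

lemma lf_dvd_iff_eval_eq_zero {a b : ℂ} (hab : a ≠ 0 ∨ b ≠ 0) {q : P2} (hq : q ∈ Vcubic) :
    lf a b ∣ q ↔ eval ![a, b] q = 0 := by
  refine ⟨fun ⟨m, hm⟩ => by rw [hm, eval_mul, eval_lf, zero_mul], fun h => ?_⟩
  rw [eq_cubic_of_mem_Vcubic hq] at h ⊢
  generalize cf 3 0 q = c₃, cf 2 1 q = c₂, cf 1 2 q = c₁, cf 0 3 q = c₀ at h ⊢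
  rw [eval_cubic] at h
  have hC := congrArg (C : ℂ → P2) h
  simp only [map_add, map_mul, map_pow, map_zero] at hC
  -- `a³ q = ℓ m + q(a, b) X³` and `b³ q = ℓ m' + q(a, b) Y³`, with `ℓ = lf a b`
  rcases hab with ha | hb
  · rw [← (((Ne.isUnit ha).map C).pow 3).dvd_mul_left]
    refine ⟨-(C c₂ * C a ^ 2 * Xv ^ 2 + C c₁ * C a * Xv * (C a * Yv + C b * Xv)
      + C c₀ * (C a ^ 2 * Yv ^ 2 + C a * C b * Xv * Yv + C b ^ 2 * Xv ^ 2)), ?_⟩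
    simp only [cubic, lf]
    linear_combination Xv ^ 3 * hC
  · rw [← (((Ne.isUnit hb).map C).pow 3).dvd_mul_left]
    refine ⟨C c₃ * (C b ^ 2 * Xv ^ 2 + C a * C b * Xv * Yv + C a ^ 2 * Yv ^ 2)
      + C c₂ * C b * Yv * (C b * Xv + C a * Yv) + C c₁ * C b ^ 2 * Yv ^ 2, ?_⟩
    simp only [cubic, lf]
    linear_combination Yv ^ 3 * hC

lemma lf_pow_three (a b : ℂ) :
    lf a b ^ 3 = cubic (b ^ 3) (-(3 * a * b ^ 2)) (3 * a ^ 2 * b) (-a ^ 3) := by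
  simp only [lf, cubic, map_neg, map_mul, map_pow, map_ofNat]
  ring

lemma lf_pow_three_mem_Vcubic (a b : ℂ) : lf a b ^ 3 ∈ Vcubic :=
  lf_pow_three a b ▸ cubic_mem_Vcubic _ _ _ _

lemma omegaForm_C_mul_left (c : ℂ) (p q : P2) : omegaForm (C c * p) q = c * omegaForm p q := by
  simp only [omegaForm, cf_C_mul]
  ring

lemma omegaForm_swap (p q : P2) : omegaForm q p = -omegaForm p q := by
  simp only [omegaForm]
  ring

lemma omegaForm_lf_pow_three (a b : ℂ) {q : P2} (hq : q ∈ Vcubic) :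
    omegaForm (lf a b ^ 3) q = eval ![a, b] q := by
  obtain ⟨h₃, h₂, h₁, h₀⟩ := cf_cubic (b ^ 3) (-(3 * a * b ^ 2)) (3 * a ^ 2 * b) (-a ^ 3)
  conv_rhs => rw [eq_cubic_of_mem_Vcubic hq, eval_cubic]
  rw [omegaForm, lf_pow_three, h₃, h₂, h₁, h₀]
  ring

def coords : P2 →ₗ[ℂ] Fin 4 → ℂ :=
  LinearMap.pi ![lcoeff ℂ (Finsupp.single 0 3 + Finsupp.single 1 0),
    lcoeff ℂ (Finsupp.single 0 2 + Finsupp.single 1 1),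
    lcoeff ℂ (Finsupp.single 0 1 + Finsupp.single 1 2),
    lcoeff ℂ (Finsupp.single 0 0 + Finsupp.single 1 3)]

def omegaMatrix : Matrix (Fin 4) (Fin 4) ℂ :=
  !![0, 0, 0, 1; 0, 0, -1 / 3, 0; 0, 1 / 3, 0, 0; -1, 0, 0, 0]

lemma coords_apply (p : P2) : coords p = ![cf 3 0 p, cf 2 1 p, cf 1 2 p, cf 0 3 p] := by
  ext i; fin_cases i <;> rfl

lemma omegaForm_eq_toBilin' (p q : P2) :
    omegaForm p q = omegaMatrix.toBilin' (coords p) (coords q) := by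
  simp only [omegaForm, omegaMatrix, coords_apply, Matrix.toBilin'_apply, Matrix.of_apply,
    Fin.sum_univ_four, Matrix.cons_val, Matrix.cons_val_zero, Matrix.cons_val_one]
  ring

lemma omegaMatrix_toBilin'_nondegenerate : omegaMatrix.toBilin'.Nondegenerate :=
  LinearMap.BilinForm.nondegenerate_toBilin'_of_det_ne_zero' _ <| by
    rw [Matrix.det_succ_row_zero]
    simp [Fin.sum_univ_succ, omegaMatrix, Matrix.det_fin_three, Fin.succAbove_of_castSucc_lt]

lemma coords_injOn : Set.InjOn coords Vcubic := by
  intro p hp q hq h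
  refine sub_eq_zero.1
    (eq_zero_of_mem_Vcubic_of_cf_eq_zero (Submodule.sub_mem _ hp hq) ?_ ?_ ?_ ?_) <;>
    rw [cf_sub, sub_eq_zero]
  simp only [coords_apply] at h
  exacts [congrFun h 0, congrFun h 1, congrFun h 2, congrFun h 3]

theorem IsLagrangian.mem_of_forall_omegaForm_eq_zero {W : Submodule ℂ P2} (hW : IsLagrangian W)
    {x : P2} (hx : x ∈ Vcubic) (h : ∀ q ∈ W, omegaForm x q = 0) : x ∈ W := by
  obtain ⟨hWV, hrank, hω⟩ := hW
  set W' := LinearMap.range (coords ∘ₗ W.subtype)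
  have hinj : Function.Injective (coords ∘ₗ W.subtype) := fun p q h =>
    Subtype.ext (coords_injOn (hWV p.2) (hWV q.2) h)
  have hW' : (Matrix.toBilin' omegaMatrix).orthogonal W' = W' := by
    refine LinearMap.BilinForm.orthogonal_eq_self_of_le_orthogonal
      omegaMatrix_toBilin'_nondegenerate ?_ ?_
    · rintro _ ⟨p, rfl⟩
      refine LinearMap.BilinForm.mem_orthogonal_iff.2 ?_
      rintro _ ⟨q, rfl⟩
      rw [LinearMap.comp_apply, LinearMap.comp_apply, Submodule.subtype_apply,
        Submodule.subtype_apply, ← omegaForm_eq_toBilin']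
      exact hω q q.2 p p.2
    · rw [LinearMap.finrank_range_of_inj hinj, hrank, Module.finrank_fin_fun]
  have hxW' : coords x ∈ W' := by
    rw [← hW', LinearMap.BilinForm.mem_orthogonal_iff]
    rintro _ ⟨q, rfl⟩
    rw [LinearMap.comp_apply, Submodule.subtype_apply, ← omegaForm_eq_toBilin', omegaForm_swap,
      h q q.2, neg_zero]
  obtain ⟨q, hq⟩ := hxW'
  exact coords_injOn (hWV q.2) hx hq ▸ q.2

/-- A Lagrangian `W` of `V` contains a perfect cube if and only if all
elements of `W` have a common root, i.e. there is `[a:b] ∈ ℂℙ¹` such that the linear form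
`bX - aY` divides every element of `W`. -/
theorem statement2 (W : Submodule ℂ P2) (hW : IsLagrangian W) :
    (∃ p ∈ W, IsPerfectCube p) ↔
      ∃ a b : ℂ, (a ≠ 0 ∨ b ≠ 0) ∧ ∀ p ∈ W, lf a b ∣ p := by
  constructor
  · rintro ⟨_, hcube, c, a, b, hc, hab, rfl⟩
    refine ⟨a, b, hab, fun q hq => (lf_dvd_iff_eval_eq_zero hab (hW.1 hq)).2 ?_⟩
    have hω := hW.2.2 _ hcube q hq
    rw [omegaForm_C_mul_left, omegaForm_lf_pow_three a b (hW.1 hq)] at hω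
    exact (mul_eq_zero.1 hω).resolve_left hc
  · rintro ⟨a, b, hab, hdvd⟩
    refine ⟨lf a b ^ 3, hW.mem_of_forall_omegaForm_eq_zero (lf_pow_three_mem_Vcubic a b)
      fun q hq => ?_, 1, a, b, one_ne_zero, hab, by rw [map_one, one_mul]⟩
    rw [omegaForm_lf_pow_three a b (hW.1 hq)]
    exact (lf_dvd_iff_eval_eq_zero hab (hW.1 hq)).1 (hdvd q hq)
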